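/- arXiv:2405.05405 — 4 statements merged into one kernel-verified Lean document; each statement's English description precedes it below -/
import Mathlib

section
/- Let u : [0,∞) → [0,∞) be bounded and monotone decreasing, and suppose there exists s > 0 such that for all t > 0, s · ∫_t^∞ u(τ) dτ ≤ u(t). Then for all t > 0, u(t) ≤ (e^s/s) · u(0) · e^{-s t}. -/
/-!
Write `F t = ∫_t^∞ u`. Since `u` decreases, `F a - F (a + h) ≥ h u (a + h) ≥ s h F (a + h)`,
i.e. `(1 + s h) F (a + h) ≤ F a`. Iterating this `n` times with step `h = T / n` and letting
`n → ∞` gives `F T ≤ e^{-sT} F 0 ≤ e^{-sT} u 0 / s`. For `t > 1/s` monotonicity again gives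
`u t / s ≤ F (t - 1/s)`, hence `u t ≤ e · u 0 · e^{-st}` (trivially also for `t ≤ 1/s`), and
`e ≤ e^s / s` because `s ≤ e^{s-1}`.
-/

open MeasureTheory Set Filter Topology Real

section AntitoneIntegral

variable {f : ℝ → ℝ} {a b : ℝ}

theorem setIntegral_Ioi_eq_setIntegral_Ioc_add (hf : IntegrableOn f (Ioi a)) (hab : a ≤ b) :
    ∫ x in Ioi a, f x = (∫ x in Ioc a b, f x) + ∫ x in Ioi b, f x := by
  rw [← Ioc_union_Ioi_eq_Ioi hab, setIntegral_union (Ioc_disjoint_Ioi le_rfl) measurableSet_Ioi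
    (hf.mono_set Ioc_subset_Ioi_self) (hf.mono_set (Ioi_subset_Ioi hab))]

theorem AntitoneOn.mul_le_setIntegral_Ioc (hanti : AntitoneOn f (Icc a b))
    (hf : IntegrableOn f (Ioc a b)) (hab : a ≤ b) : (b - a) * f b ≤ ∫ x in Ioc a b, f x := by
  have h := setIntegral_ge_of_const_le_real measurableSet_Ioc (by simp)
    (fun x hx => hanti (Ioc_subset_Icc_self hx) (right_mem_Icc.2 hab) hx.2) hf
  rwa [measureReal_def, Real.volume_Ioc, ENNReal.toReal_ofReal (sub_nonneg.2 hab), mul_comm] at h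

theorem AntitoneOn.setIntegral_Ioc_le_mul (hanti : AntitoneOn f (Icc a b))
    (hf : IntegrableOn f (Ioc a b)) (hab : a ≤ b) : ∫ x in Ioc a b, f x ≤ (b - a) * f a := by
  have h := setIntegral_mono_on hf (integrableOn_const (by simp)) measurableSet_Ioc
    (fun x hx => hanti (left_mem_Icc.2 hab) (Ioc_subset_Icc_self hx) hx.1.le)
  rwa [setIntegral_const, measureReal_def, Real.volume_Ioc,
    ENNReal.toReal_ofReal (sub_nonneg.2 hab), smul_eq_mul] at h

theorem AntitoneOn.mul_le_setIntegral_Ioi (hanti : AntitoneOn f (Icc a b))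
    (hf : IntegrableOn f (Ioi a)) (hab : a ≤ b) (hnonneg : ∀ x ∈ Ioi b, 0 ≤ f x) :
    (b - a) * f b ≤ ∫ x in Ioi a, f x := by
  rw [setIntegral_Ioi_eq_setIntegral_Ioc_add hf hab]
  linarith [hanti.mul_le_setIntegral_Ioc (hf.mono_set Ioc_subset_Ioi_self) hab,
    setIntegral_nonneg (μ := volume) measurableSet_Ioi hnonneg]

end AntitoneIntegral

section DiscreteGronwall

variable {F : ℝ → ℝ} {s : ℝ}

theorem mul_one_add_mul_pow_le (hs : 0 ≤ s)
    (hstep : ∀ a h, 0 ≤ a → 0 < h → (1 + s * h) * F (a + h) ≤ F a)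
    {a h : ℝ} (ha : 0 ≤ a) (hh : 0 < h) (n : ℕ) :
    F (a + n * h) * (1 + s * h) ^ n ≤ F a := by
  induction n with
  | zero => simp
  | succ n ih =>
    calc F (a + (n + 1 : ℕ) * h) * (1 + s * h) ^ (n + 1)
        = (1 + s * h) * F (a + n * h + h) * (1 + s * h) ^ n := by
          rw [Nat.cast_succ, add_one_mul, ← add_assoc, pow_succ]; ring
      _ ≤ F (a + n * h) * (1 + s * h) ^ n := by
          gcongr; exact hstep _ _ (by positivity) hh
      _ ≤ F a := ih

theorem le_exp_neg_mul_of_one_add_mul_le (hs : 0 ≤ s)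
    (hstep : ∀ a h, 0 ≤ a → 0 < h → (1 + s * h) * F (a + h) ≤ F a)
    {a T : ℝ} (ha : 0 ≤ a) (hT : 0 ≤ T) :
    F (a + T) ≤ exp (-(s * T)) * F a := by
  rcases hT.eq_or_lt with rfl | hT
  · simp
  have hlim : Tendsto (fun n : ℕ => F (a + T) * (1 + s * T / n) ^ n) atTop
      (𝓝 (F (a + T) * exp (s * T))) :=
    (tendsto_one_add_div_pow_exp (s * T)).const_mul _
  have hle : F (a + T) * exp (s * T) ≤ F a := by
    refine le_of_tendsto hlim ((eventually_gt_atTop 0).mono fun n hn => ?_)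
    have hn : (0 : ℝ) < n := Nat.cast_pos.2 hn
    have := mul_one_add_mul_pow_le hs hstep ha (div_pos hT hn) n
    rwa [mul_div_cancel₀ _ hn.ne', ← mul_div_assoc] at this
  rwa [exp_neg, ← div_eq_inv_mul, le_div_iff₀ (exp_pos _)]

end DiscreteGronwall

section TailIntegral

variable {u : ℝ → ℝ} {s a : ℝ}

theorem one_add_mul_mul_setIntegral_Ioi_le {h : ℝ} (hh : 0 ≤ h)
    (hanti : AntitoneOn u (Icc a (a + h))) (hint : IntegrableOn u (Ioi a))
    (hineq : s * ∫ x in Ioi (a + h), u x ≤ u (a + h)) :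
    (1 + s * h) * ∫ x in Ioi (a + h), u x ≤ ∫ x in Ioi a, u x := by
  have hah : a ≤ a + h := le_add_of_nonneg_right hh
  have hIoc := hanti.mul_le_setIntegral_Ioc (hint.mono_set Ioc_subset_Ioi_self) hah
  rw [add_sub_cancel_left] at hIoc
  rw [setIntegral_Ioi_eq_setIntegral_Ioc_add hint hah]
  linarith [mul_le_mul_of_nonneg_left hineq hh]

theorem mul_setIntegral_Ioi_le_of_forall_gt (hs : 0 ≤ s) (hanti : AntitoneOn u (Ici a))
    (hint : IntegrableOn u (Ioi a)) (hineq : ∀ t, a < t → s * ∫ x in Ioi t, u x ≤ u t) :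
    s * ∫ x in Ioi a, u x ≤ u a := by
  have hε : ∀ ε, 0 < ε → s * ∫ x in Ioi a, u x ≤ s * ε * u a + u a := by
    intro ε hε
    have hah : a ≤ a + ε := le_add_of_nonneg_right hε.le
    have hIoc := (hanti.mono Icc_subset_Ici_self).setIntegral_Ioc_le_mul
      (hint.mono_set Ioc_subset_Ioi_self) hah
    rw [add_sub_cancel_left] at hIoc
    have htail := hineq (a + ε) (lt_add_of_pos_right a hε)
    have hua : u (a + ε) ≤ u a := hanti self_mem_Ici hah hah
    rw [setIntegral_Ioi_eq_setIntegral_Ioc_add hint hah]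
    linarith [mul_le_mul_of_nonneg_left hIoc hs]
  have hlim : Tendsto (fun ε => s * ε * u a + u a) (𝓝[>] 0) (𝓝 (u a)) := by
    have := ((continuous_const.mul continuous_id).mul continuous_const).add continuous_const
      |>.tendsto (0 : ℝ) (f := fun ε => s * ε * u a + u a)
    simpa using this.mono_left nhdsWithin_le_nhds
  exact ge_of_tendsto hlim (eventually_nhdsWithin_of_forall hε)

theorem mul_setIntegral_Ioi_le_exp_neg_mul {T : ℝ} (hs : 0 ≤ s)
    (hanti : AntitoneOn u (Ici 0)) (hint : ∀ t, 0 ≤ t → IntegrableOn u (Ioi t))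
    (hineq : ∀ t, 0 < t → s * ∫ x in Ioi t, u x ≤ u t) (hT : 0 ≤ T) :
    s * ∫ x in Ioi T, u x ≤ exp (-(s * T)) * u 0 := by
  have hstep : ∀ a h, 0 ≤ a → 0 < h →
      (1 + s * h) * ∫ x in Ioi (a + h), u x ≤ ∫ x in Ioi a, u x := fun a h ha hh =>
    one_add_mul_mul_setIntegral_Ioi_le hh.le
      (hanti.mono (Icc_subset_Ici_self.trans (Ici_subset_Ici.2 ha))) (hint a ha)
      (hineq _ (by positivity))
  have hdecay := le_exp_neg_mul_of_one_add_mul_le (F := fun a => ∫ x in Ioi a, u x) hs hstep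
    le_rfl hT
  rw [zero_add] at hdecay
  calc s * ∫ x in Ioi T, u x ≤ s * (exp (-(s * T)) * ∫ x in Ioi 0, u x) := by gcongr
    _ = exp (-(s * T)) * (s * ∫ x in Ioi 0, u x) := by ring
    _ ≤ exp (-(s * T)) * u 0 := by
        gcongr; exact mul_setIntegral_Ioi_le_of_forall_gt hs hanti (hint 0 le_rfl) hineq

end TailIntegral

theorem exp_one_le_exp_div_self {s : ℝ} (hs : 0 < s) : exp 1 ≤ exp s / s := by
  rw [le_div_iff₀ hs]
  calc exp 1 * s ≤ exp 1 * exp (s - 1) := by gcongr; linarith [add_one_le_exp (s - 1)]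
    _ = exp s := by rw [← exp_add, add_sub_cancel]

theorem weak_gronwall_general (u : ℝ → ℝ) (s : ℝ) (hs : 0 < s)
    (hpos : ∀ t, 0 ≤ t → 0 ≤ u t)
    (hmono : ∀ t₁ t₂, 0 ≤ t₁ → t₁ ≤ t₂ → u t₂ ≤ u t₁)
    (hint : ∀ t, 0 ≤ t → IntegrableOn u (Set.Ioi t))
    (hineq : ∀ t, 0 < t → s * ∫ τ in Set.Ioi t, u τ ≤ u t) :
    ∀ t, 0 < t → u t ≤ (Real.exp s / s) * u 0 * Real.exp (-s * t) := by
  have hanti : AntitoneOn u (Ici 0) := fun x hx y _ hxy => hmono x y hx hxy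
  intro t ht
  have hu0 : 0 ≤ u 0 := hpos 0 le_rfl
  suffices u t ≤ exp (1 - s * t) * u 0 by
    calc u t ≤ exp (1 - s * t) * u 0 := this
      _ = exp 1 * u 0 * exp (-s * t) := by rw [sub_eq_add_neg, exp_add]; ring_nf
      _ ≤ exp s / s * u 0 * exp (-s * t) := by gcongr; exact exp_one_le_exp_div_self hs
  rcases le_or_gt t s⁻¹ with hts | hts
  · have : s * t ≤ 1 := by simpa [hs.ne'] using mul_le_mul_of_nonneg_left hts hs.le
    calc u t ≤ u 0 := hanti self_mem_Ici ht.le ht.le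
      _ ≤ exp (1 - s * t) * u 0 := le_mul_of_one_le_left hu0 (one_le_exp (by linarith))
  · have ha : 0 ≤ t - s⁻¹ := sub_nonneg.2 hts.le
    have hanti' : AntitoneOn u (Icc (t - s⁻¹) t) :=
      hanti.mono (Icc_subset_Ici_self.trans (Ici_subset_Ici.2 ha))
    calc u t = s * ((t - (t - s⁻¹)) * u t) := by
          rw [sub_sub_cancel, mul_inv_cancel_left₀ hs.ne']
      _ ≤ s * ∫ τ in Ioi (t - s⁻¹), u τ := by
          gcongr
          exact hanti'.mul_le_setIntegral_Ioi (hint _ ha) (sub_le_self _ (inv_pos.2 hs).le)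
            fun x hx => hpos x (ht.trans hx).le
      _ ≤ exp (-(s * (t - s⁻¹))) * u 0 :=
          mul_setIntegral_Ioi_le_exp_neg_mul hs.le hanti hint hineq ha
      _ = exp (1 - s * t) * u 0 := by rw [mul_sub, mul_inv_cancel₀ hs.ne']; ring_nf

theorem weak_gronwall (u : ℝ → ℝ) (s : ℝ) (hs : 0 < s)
    (hpos : ∀ t, 0 ≤ t → 0 ≤ u t)
    (hbdd : ∃ C, ∀ t, 0 ≤ t → u t ≤ C)
    (hmono : ∀ t₁ t₂, 0 ≤ t₁ → t₁ ≤ t₂ → u t₂ ≤ u t₁)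
    (hint : ∀ t, 0 ≤ t → IntegrableOn u (Set.Ioi t))
    (hineq : ∀ t, 0 < t → s * ∫ τ in Set.Ioi t, u τ ≤ u t) :
    ∀ t, 0 < t → u t ≤ (Real.exp s / s) * u 0 * Real.exp (-s * t) :=
  weak_gronwall_general u s hs hpos hmono hint hineq
end

section
/- Let 1 < p < 2 and set c₁ = min{1, 2(p-1)}. Then for all vectors ξ, η ∈ ℝ^N with ξ ≠ 0, ⟨|ξ|^{p-2} ξ − |η|^{p-2} η, ξ − η⟩ ≥ c₁ · |ξ − η|² / (|ξ|^{2-p} + |η|^{2-p}). -/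
/-!
Write `a = ‖ξ‖`, `b = ‖η‖`. The pairing splits as
`(a^(p-1) - b^(p-1)) (a - b) + (a^(p-2) + b^(p-2)) (a b - ⟪ξ, η⟫)` while
`‖ξ - η‖² = (a - b)² + 2 (a b - ⟪ξ, η⟫)`. The angular part is harmless since
`(a^(p-2) + b^(p-2)) (a^(2-p) + b^(2-p)) ≥ 4`. By homogeneity, with `r = b / a ≤ 1`, the radial
part reduces to `r^(p-1) - r^(2-p) ≤ (1 - c₁) (1 - r)`: for `p ≥ 3/2` the left side is
nonpositive, and for `p < 3/2` the substitution `r = exp (-2v)`, `s = 3 - 2p` turns it into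
`sinh (s v) ≤ s sinh v`, which is convexity of `sinh` on `[0, ∞)`.
-/

open Real Set
open scoped RealInnerProductSpace

theorem Real.convexOn_sinh_Ici : ConvexOn ℝ (Ici 0) sinh := by
  refine MonotoneOn.convexOn_of_deriv (convex_Ici 0) continuous_sinh.continuousOn
    differentiable_sinh.differentiableOn ?_
  rw [deriv_sinh, interior_Ici]
  exact cosh_strictMonoOn.monotoneOn.mono Ioi_subset_Ici_self

theorem Real.sinh_mul_le_mul_sinh {s v : ℝ} (hs0 : 0 ≤ s) (hs1 : s ≤ 1) (hv : 0 ≤ v) :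
    sinh (s * v) ≤ s * sinh v := by
  simpa using convexOn_sinh_Ici.2 (mem_Ici.2 hv) self_mem_Ici hs0 (sub_nonneg.2 hs1) (by ring)

theorem Real.two_mul_exp_mul_sinh (x y : ℝ) : 2 * exp x * sinh y = exp (x + y) - exp (x - y) := by
  rw [sinh_eq, exp_add, exp_sub, exp_neg]
  field_simp

theorem Real.rpow_sub_rpow_le_mul_one_sub {r s : ℝ} (hr0 : 0 < r) (hr1 : r ≤ 1)
    (hs0 : 0 ≤ s) (hs1 : s ≤ 1) :
    r ^ ((1 - s) / 2) - r ^ ((1 + s) / 2) ≤ s * (1 - r) := by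
  have hv : 0 ≤ -log r / 2 := by linarith [log_nonpos hr0.le hr1]
  calc r ^ ((1 - s) / 2) - r ^ ((1 + s) / 2)
      = 2 * exp (log r / 2) * sinh (s * (-log r / 2)) := by
        rw [two_mul_exp_mul_sinh, rpow_def_of_pos hr0, rpow_def_of_pos hr0]
        ring_nf
    _ ≤ 2 * exp (log r / 2) * (s * sinh (-log r / 2)) := by
        gcongr; exact sinh_mul_le_mul_sinh hs0 hs1 hv
    _ = s * (1 - r) := by
        rw [mul_left_comm, two_mul_exp_mul_sinh]
        ring_nf
        rw [exp_zero, exp_log hr0]; ring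

theorem rpow_sub_rpow_le_min_mul {p r : ℝ} (hp1 : 1 < p) (hp2 : p < 2) (hr0 : 0 ≤ r)
    (hr1 : r ≤ 1) :
    r ^ (p - 1) - r ^ (2 - p) ≤ (1 - min 1 (2 * (p - 1))) * (1 - r) := by
  rcases hr0.eq_or_lt with rfl | hr0
  · rw [zero_rpow (by linarith), zero_rpow (by linarith)]
    nlinarith [min_le_left 1 (2 * (p - 1))]
  rcases le_or_gt (3 / 2) p with hp | hp
  · rw [min_eq_left (by linarith), sub_self, zero_mul, sub_nonpos]
    exact rpow_le_rpow_of_exponent_ge hr0 hr1 (by linarith)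
  · have h := rpow_sub_rpow_le_mul_one_sub hr0 hr1 (s := 3 - 2 * p) (by linarith)
      (by linarith)
    rw [show (1 - (3 - 2 * p)) / 2 = p - 1 by ring,
      show (1 + (3 - 2 * p)) / 2 = 2 - p by ring] at h
    rw [min_eq_right (by linarith)]
    linarith

theorem min_mul_sub_sq_le_of_le {p a b : ℝ} (hp1 : 1 < p) (hp2 : p < 2) (hb : 0 ≤ b)
    (hba : b ≤ a) :
    min 1 (2 * (p - 1)) * (a - b) ^ 2
      ≤ (a ^ (p - 1) - b ^ (p - 1)) * (a - b) * (a ^ (2 - p) + b ^ (2 - p)) := by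
  obtain ⟨r, hr0, hr1, rfl⟩ : ∃ r, 0 ≤ r ∧ r ≤ 1 ∧ b = a * r := by
    rcases (hb.trans hba).eq_or_lt with rfl | ha
    · exact ⟨0, le_rfl, zero_le_one, by linarith⟩
    · exact ⟨b / a, div_nonneg hb ha.le, div_le_one_of_le₀ hba ha.le, by field_simp⟩
  have ha : 0 ≤ a := hb.trans hba
  have hkey := rpow_sub_rpow_le_min_mul hp1 hp2 hr0 hr1
  have har : a ^ (p - 1) * a ^ (2 - p) = a := by
    rw [← rpow_add' ha (by norm_num)]; norm_num
  have hrr : r ^ (p - 1) * r ^ (2 - p) = r := by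
    rw [← rpow_add' hr0 (by norm_num)]; norm_num
  rw [mul_rpow ha hr0, mul_rpow ha hr0]
  calc min 1 (2 * (p - 1)) * (a - a * r) ^ 2
      ≤ min 1 (2 * (p - 1)) * (a - a * r) ^ 2
        + a ^ 2 * (1 - r)
          * ((1 - min 1 (2 * (p - 1))) * (1 - r) - (r ^ (p - 1) - r ^ (2 - p))) := by
        have : 0 ≤ a ^ 2 * (1 - r) := mul_nonneg (sq_nonneg a) (sub_nonneg.2 hr1)
        nlinarith
    _ = _ := by
        linear_combination
          (a * (1 - r) * (r ^ (p - 1) * r ^ (2 - p) - 1 - r ^ (2 - p) + r ^ (p - 1))) * har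
          + (a ^ 2 * (1 - r)) * hrr

theorem min_mul_sub_sq_le {p a b : ℝ} (hp1 : 1 < p) (hp2 : p < 2) (ha : 0 ≤ a) (hb : 0 ≤ b) :
    min 1 (2 * (p - 1)) * (a - b) ^ 2
      ≤ (a ^ (p - 1) - b ^ (p - 1)) * (a - b) * (a ^ (2 - p) + b ^ (2 - p)) := by
  rcases le_total b a with hba | hab
  · exact min_mul_sub_sq_le_of_le hp1 hp2 hb hba
  · calc min 1 (2 * (p - 1)) * (a - b) ^ 2 = min 1 (2 * (p - 1)) * (b - a) ^ 2 := by ring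
      _ ≤ (b ^ (p - 1) - a ^ (p - 1)) * (b - a) * (b ^ (2 - p) + a ^ (2 - p)) :=
        min_mul_sub_sq_le_of_le hp1 hp2 ha hab
      _ = _ := by ring

theorem four_le_rpow_add_mul_rpow_neg_add {a b : ℝ} (ha : 0 < a) (hb : 0 < b) (q : ℝ) :
    4 ≤ (a ^ q + b ^ q) * (a ^ (-q) + b ^ (-q)) := by
  have hx := rpow_pos_of_pos ha q
  have hy := rpow_pos_of_pos hb q
  rw [rpow_neg ha.le, rpow_neg hb.le, ← sub_nonneg]
  have hsq : (a ^ q + b ^ q) * ((a ^ q)⁻¹ + (b ^ q)⁻¹) - 4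
      = (a ^ q - b ^ q) ^ 2 / (a ^ q * b ^ q) := by
    field_simp; ring
  rw [hsq]; positivity

section InnerProductSpace

variable {E : Type*} [NormedAddCommGroup E] [InnerProductSpace ℝ E]

theorem inner_rpow_smul_sub_rpow_smul_sub {p : ℝ} (hp : p ≠ 1) (ξ η : E) :
    ⟪‖ξ‖ ^ (p - 2) • ξ - ‖η‖ ^ (p - 2) • η, ξ - η⟫
      = (‖ξ‖ ^ (p - 1) - ‖η‖ ^ (p - 1)) * (‖ξ‖ - ‖η‖)
        + (‖ξ‖ ^ (p - 2) + ‖η‖ ^ (p - 2)) * (‖ξ‖ * ‖η‖ - ⟪ξ, η⟫) := by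
  have hpow : ∀ x : ℝ, 0 ≤ x → x ^ (p - 1) = x ^ (p - 2) * x := fun x hx => by
    rw [← rpow_add_one' hx (by contrapose! hp; linarith)]; ring_nf
  rw [hpow _ (norm_nonneg ξ), hpow _ (norm_nonneg η)]
  simp only [inner_sub_left, inner_sub_right, real_inner_smul_left, real_inner_self_eq_norm_sq,
    real_inner_comm ξ η]
  ring

theorem min_mul_norm_sub_sq_le {p : ℝ} (hp1 : 1 < p) (hp2 : p < 2) (ξ η : E) :
    min 1 (2 * (p - 1)) * ‖ξ - η‖ ^ 2
      ≤ (‖ξ‖ ^ (2 - p) + ‖η‖ ^ (2 - p))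
        * ⟪‖ξ‖ ^ (p - 2) • ξ - ‖η‖ ^ (p - 2) • η, ξ - η⟫ := by
  set c := min 1 (2 * (p - 1))
  set D := ‖ξ‖ ^ (2 - p) + ‖η‖ ^ (2 - p)
  have hradial := min_mul_sub_sq_le hp1 hp2 (norm_nonneg ξ) (norm_nonneg η)
  have hangular : 2 * c * (‖ξ‖ * ‖η‖ - ⟪ξ, η⟫)
      ≤ D * (‖ξ‖ ^ (p - 2) + ‖η‖ ^ (p - 2)) * (‖ξ‖ * ‖η‖ - ⟪ξ, η⟫) := by
    rcases eq_or_ne ξ 0 with rfl | hξ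
    · simp
    rcases eq_or_ne η 0 with rfl | hη
    · simp
    refine mul_le_mul_of_nonneg_right ?_ (sub_nonneg.2 (real_inner_le_norm ξ η))
    have h4 := four_le_rpow_add_mul_rpow_neg_add (norm_pos_iff.2 hξ) (norm_pos_iff.2 hη) (p - 2)
    rw [neg_sub] at h4
    linarith [min_le_left 1 (2 * (p - 1))]
  rw [inner_rpow_smul_sub_rpow_smul_sub hp1.ne', norm_sub_sq_real]
  linear_combination hradial + hangular

end InnerProductSpace

theorem p_monotonicity {N : ℕ} (p : ℝ) (hp1 : 1 < p) (hp2 : p < 2)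
    (ξ η : EuclideanSpace ℝ (Fin N)) (hξ : ξ ≠ 0) :
    min 1 (2 * (p - 1)) * ‖ξ - η‖ ^ 2 / (‖ξ‖ ^ (2 - p) + ‖η‖ ^ (2 - p))
      ≤ @inner ℝ _ _ ((‖ξ‖ ^ (p - 2)) • ξ - (‖η‖ ^ (p - 2)) • η) (ξ - η) := by
  have hD : 0 < ‖ξ‖ ^ (2 - p) + ‖η‖ ^ (2 - p) :=
    add_pos_of_pos_of_nonneg (rpow_pos_of_pos (norm_pos_iff.2 hξ) _)
      (rpow_nonneg (norm_nonneg η) _)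
  rw [div_le_iff₀ hD, mul_comm _ (_ + _)]
  exact min_mul_norm_sub_sq_le hp1 hp2 ξ η
end

section
/- Let 1 < p < 2, D₁ ≥ D₂ > 0, D ≥ 0, and let v : ℝ^N → [0,∞) be a measurable function satisfying V_{D₁}(y) ≤ v(y) ≤ V_{D₂}(y) for all |y| ≥ 1. Then there exists a constant C = C(D, D₁, D₂, p) > 0 such that |v(y) − V_D(y)| ≤ C · |y|^{−p/((p−1)(2−p))} for all |y| ≥ 1. -/
/-!
Each profile is `V_D(y) = (D + a)^(-α)` with `a = c‖y‖^q`, `c = (2-p)/p`, `q = p/(p-1)`,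
`α = (p-1)/(2-p)`. By the mean value theorem `D ↦ (D + a)^(-α)` is `α a^(-α-1)`-Lipschitz on
`[0, ∞)`, and `a^(-α-1)` is a constant multiple of `‖y‖^(-p/((p-1)(2-p)))`, so profiles with
different `D` approach each other at that rate. A function trapped between `V_{D₁}` and `V_{D₂}`
is no farther from `V_D` than the larger of the two.
-/

/-- The stationary Barenblatt profile. -/
noncomputable def V (N : ℕ) (p D : ℝ) (y : EuclideanSpace ℝ (Fin N)) : ℝ :=
  (D + (2 - p) / p * ‖y‖ ^ (p / (p - 1))) ^ (-((p - 1) / (2 - p)))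

open Real

lemma abs_rpow_add_sub_rpow_add_le {a α D D' : ℝ} (ha : 0 < a) (hα : 0 ≤ α) (hD : 0 ≤ D)
    (hD' : 0 ≤ D') : |(D + a) ^ (-α) - (D' + a) ^ (-α)| ≤ α * a ^ (-α - 1) * |D - D'| := by
  have hderiv : ∀ x ∈ Set.Ici (0 : ℝ),
      HasDerivWithinAt (fun x ↦ (x + a) ^ (-α)) (-α * (x + a) ^ (-α - 1)) (Set.Ici 0) x := by
    intro x hx
    have hxa : 0 < x + a := by linarith [hx.out]
    simpa using (((hasDerivAt_id x).add_const a).rpow_const (p := -α)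
      (Or.inl hxa.ne')).hasDerivWithinAt
  have hbound : ∀ x ∈ Set.Ici (0 : ℝ), ‖-α * (x + a) ^ (-α - 1)‖ ≤ α * a ^ (-α - 1) := by
    intro x hx
    have hxa : 0 < x + a := by linarith [hx.out]
    rw [norm_mul, norm_neg, norm_of_nonneg hα, norm_of_nonneg (rpow_pos_of_pos hxa _).le]
    exact mul_le_mul_of_nonneg_left
      (rpow_le_rpow_of_nonpos ha (by linarith [hx.out]) (by linarith)) hα
  simpa using (convex_Ici 0).norm_image_sub_le_of_norm_hasDerivWithin_le hderiv hbound hD' hD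

lemma exists_abs_V_sub_V_le {N : ℕ} {p : ℝ} (hp1 : 1 < p) (hp2 : p < 2) :
    ∃ K : ℝ, 0 < K ∧ ∀ D D' : ℝ, 0 ≤ D → 0 ≤ D' → ∀ y : EuclideanSpace ℝ (Fin N), y ≠ 0 →
      |V N p D' y - V N p D y| ≤ K * |D' - D| * ‖y‖ ^ (-(p / ((p - 1) * (2 - p)))) := by
  set c : ℝ := (2 - p) / p
  set α : ℝ := (p - 1) / (2 - p)
  have hc : 0 < c := div_pos (by linarith) (by linarith)
  have hα : 0 < α := div_pos (by linarith) (by linarith)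
  refine ⟨α * c ^ (-α - 1), by positivity, fun D D' hD hD' y hy ↦ ?_⟩
  have ht : 0 < ‖y‖ := norm_pos_iff.mpr hy
  have hdecay : (c * ‖y‖ ^ (p / (p - 1))) ^ (-α - 1)
      = c ^ (-α - 1) * ‖y‖ ^ (-(p / ((p - 1) * (2 - p)))) := by
    rw [mul_rpow hc.le (rpow_nonneg ht.le _), ← rpow_mul ht.le]
    congr 2
    have : p - 1 ≠ 0 := by linarith
    have : 2 - p ≠ 0 := by linarith
    simp only [α]
    field_simp
    ring
  have hlip := abs_rpow_add_sub_rpow_add_le (mul_pos hc (rpow_pos_of_pos ht (p / (p - 1))))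
    hα.le hD' hD
  rw [hdecay] at hlip
  exact hlip.trans_eq (by ring)

theorem decay_of_trapped_functions_general {N : ℕ} (p D D₁ D₂ : ℝ) (hp1 : 1 < p) (hp2 : p < 2)
    (hD2 : 0 < D₂) (hD12 : D₂ ≤ D₁) (hD : 0 ≤ D)
    (v : EuclideanSpace ℝ (Fin N) → ℝ)
    (htrap : ∀ y : EuclideanSpace ℝ (Fin N), 1 ≤ ‖y‖ → V N p D₁ y ≤ v y ∧ v y ≤ V N p D₂ y) :
    ∃ C : ℝ, 0 < C ∧ ∀ y : EuclideanSpace ℝ (Fin N), 1 ≤ ‖y‖ →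
      |v y - V N p D y| ≤ C * ‖y‖ ^ (-(p / ((p - 1) * (2 - p)))) := by
  obtain ⟨K, hK, hlip⟩ := exists_abs_V_sub_V_le (N := N) hp1 hp2
  refine ⟨K * (|D₁ - D| + |D₂ - D| + 1), by positivity, fun y hy ↦ ?_⟩
  have hy0 : y ≠ 0 := norm_pos_iff.mp (by linarith)
  set T := ‖y‖ ^ (-(p / ((p - 1) * (2 - p))))
  have hT : 0 < T := rpow_pos_of_pos (by linarith) _
  have h₁ := hlip D D₁ hD (by linarith) y hy0
  have h₂ := hlip D D₂ hD hD2.le y hy0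
  obtain ⟨hlow, hup⟩ := htrap y hy
  calc |v y - V N p D y|
      ≤ max |V N p D₁ y - V N p D y| |V N p D₂ y - V N p D y| :=
        abs_le_max_abs_abs (by linarith) (by linarith)
    _ ≤ K * (|D₁ - D| + |D₂ - D| + 1) * T := by
        refine max_le (h₁.trans ?_) (h₂.trans ?_) <;>
          gcongr <;> linarith [abs_nonneg (D₁ - D), abs_nonneg (D₂ - D)]

theorem decay_of_trapped_functions {N : ℕ} (p D D₁ D₂ : ℝ) (hp1 : 1 < p) (hp2 : p < 2)
    (hD2 : 0 < D₂) (hD12 : D₂ ≤ D₁) (hD : 0 ≤ D)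
    (v : EuclideanSpace ℝ (Fin N) → ℝ) (hv : Measurable v) (hv0 : ∀ y, 0 ≤ v y)
    (htrap : ∀ y : EuclideanSpace ℝ (Fin N), 1 ≤ ‖y‖ → V N p D₁ y ≤ v y ∧ v y ≤ V N p D₂ y) :
    ∃ C : ℝ, 0 < C ∧ ∀ y : EuclideanSpace ℝ (Fin N), 1 ≤ ‖y‖ →
      |v y - V N p D y| ≤ C * ‖y‖ ^ (-(p / ((p - 1) * (2 - p)))) :=
  decay_of_trapped_functions_general p D D₁ D₂ hp1 hp2 hD2 hD12 hD v htrap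
end

section
/- Let 1 < p < 2 with p ≠ 3/2, and let γ = (2p−3)/(p−1) (so γ < 1 and γ ≠ 0). Let t, s be real numbers with 0 < t ≤ s. Then s − t ≤ √(2 s^{2−γ}) · √( (t^γ − s^γ)/(γ(γ−1)) − s^{γ−1}(t − s)/(γ−1) ). -/
open Real Set

theorem csiszar_kullback_pointwise (p γ : ℝ) (hp1 : 1 < p) (hp2 : p < 2) (hp3 : p ≠ 3 / 2)
    (hγ : γ = (2 * p - 3) / (p - 1)) (t s : ℝ) (ht : 0 < t) (hts : t ≤ s) :
    s - t ≤ Real.sqrt (2 * s ^ (2 - γ)) *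
      Real.sqrt ((t ^ γ - s ^ γ) / (γ * (γ - 1)) - s ^ (γ - 1) * (t - s) / (γ - 1)) := by
  have hs : 0 < s := lt_of_lt_of_le ht hts
  have hp1' : 0 < p - 1 := by linarith
  have hγ1 : γ < 1 := by
    rw [hγ, div_lt_one hp1']; linarith
  have hγ1' : γ - 1 < 0 := by linarith
  have hγ0 : γ ≠ 0 := by
    rw [hγ]
    exact div_ne_zero (by intro h; apply hp3; linarith) (by linarith)
  -- first layer: tangent-line inequality for x ↦ x^(γ-1)
  have hu : ∀ x ∈ Icc t s, (γ - 1) * s ^ (γ - 2) * (x - s) ≤ x ^ (γ - 1) - s ^ (γ - 1) := by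
    set u : ℝ → ℝ := fun x => x ^ (γ - 1) - s ^ (γ - 1) - (γ - 1) * s ^ (γ - 2) * (x - s) with hu_def
    have hus : u s = 0 := by simp [hu_def]
    have hcont : ContinuousOn u (Icc t s) := by
      apply ContinuousOn.sub
      · apply ContinuousOn.sub
        · exact continuousOn_id.rpow_const fun x hx => Or.inl (ne_of_gt (lt_of_lt_of_le ht hx.1))
        · exact continuousOn_const
      · exact (continuousOn_const.mul (continuousOn_id.sub continuousOn_const))
    have hanti : AntitoneOn u (Icc t s) := by
      apply antitoneOn_of_deriv_nonpos (convex_Icc t s) hcont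
      · intro x hx
        rw [interior_Icc] at hx
        have hx0 : 0 < x := lt_trans ht hx.1
        have hd : HasDerivAt u ((γ - 1) * x ^ (γ - 1 - 1) - (γ - 1) * s ^ (γ - 2)) x := by
          have h1 : HasDerivAt (fun y : ℝ => y ^ (γ - 1)) ((γ - 1) * x ^ (γ - 1 - 1)) x :=
            Real.hasDerivAt_rpow_const (Or.inl hx0.ne')
          have h2 : HasDerivAt (fun y : ℝ => (γ - 1) * s ^ (γ - 2) * (y - s))
              ((γ - 1) * s ^ (γ - 2)) x := by
            simpa using (((hasDerivAt_id x).sub_const s).const_mul ((γ - 1) * s ^ (γ - 2)))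
          exact (h1.sub_const _).sub h2
        exact hd.differentiableAt.differentiableWithinAt
      · intro x hx
        rw [interior_Icc] at hx
        have hx0 : 0 < x := lt_trans ht hx.1
        have hd : HasDerivAt u ((γ - 1) * x ^ (γ - 1 - 1) - (γ - 1) * s ^ (γ - 2)) x := by
          have h1 : HasDerivAt (fun y : ℝ => y ^ (γ - 1)) ((γ - 1) * x ^ (γ - 1 - 1)) x :=
            Real.hasDerivAt_rpow_const (Or.inl hx0.ne')
          have h2 : HasDerivAt (fun y : ℝ => (γ - 1) * s ^ (γ - 2) * (y - s))
              ((γ - 1) * s ^ (γ - 2)) x := by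
            simpa using (((hasDerivAt_id x).sub_const s).const_mul ((γ - 1) * s ^ (γ - 2)))
          exact (h1.sub_const _).sub h2
        rw [hd.deriv]
        have hxs : x ^ (γ - 1 - 1) ≥ s ^ (γ - 1 - 1) :=
          Real.rpow_le_rpow_of_nonpos hx0 hx.2.le (by linarith)
        rw [show γ - 1 - 1 = γ - 2 from by ring] at hxs ⊢
        nlinarith [mul_nonpos_of_nonpos_of_nonneg hγ1'.le (sub_nonneg.mpr hxs)]
    intro x hx
    have := hanti hx (right_mem_Icc.mpr (hx.1.trans hx.2)) hx.2
    rw [hus] at this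
    simp only [hu_def] at this
    linarith
  -- second layer
  set g : ℝ → ℝ := fun x => (x ^ γ - s ^ γ) / (γ * (γ - 1)) - s ^ (γ - 1) * (x - s) / (γ - 1)
      - s ^ (γ - 2) * (x - s) ^ 2 / 2 with hg_def
  have hgs : g s = 0 := by simp [hg_def]
  have hcontg : ContinuousOn g (Icc t s) := by
    apply ContinuousOn.sub
    apply ContinuousOn.sub
    · exact ((continuousOn_id.rpow_const fun x hx =>
        Or.inl (ne_of_gt (lt_of_lt_of_le ht hx.1))).sub continuousOn_const).div_const _
    · exact ((continuousOn_const.mul (continuousOn_id.sub continuousOn_const)).div_const _)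
    · exact ((continuousOn_const.mul ((continuousOn_id.sub continuousOn_const).pow 2)).div_const _)
  have hantig : AntitoneOn g (Icc t s) := by
    apply antitoneOn_of_deriv_nonpos (convex_Icc t s) hcontg
    · intro x hx
      rw [interior_Icc] at hx
      have hx0 : 0 < x := lt_trans ht hx.1
      have hd : HasDerivAt g (γ * x ^ (γ - 1) / (γ * (γ - 1)) - s ^ (γ - 1) / (γ - 1)
          - s ^ (γ - 2) * (2 * (x - s)) / 2) x := by
        have h1 : HasDerivAt (fun y : ℝ => (y ^ γ - s ^ γ) / (γ * (γ - 1)))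
            (γ * x ^ (γ - 1) / (γ * (γ - 1))) x :=
          (((Real.hasDerivAt_rpow_const (Or.inl hx0.ne')).sub_const _).div_const _)
        have h2 : HasDerivAt (fun y : ℝ => s ^ (γ - 1) * (y - s) / (γ - 1))
            (s ^ (γ - 1) / (γ - 1)) x := by
          simpa using ((((hasDerivAt_id x).sub_const s).const_mul (s ^ (γ - 1))).div_const (γ - 1))
        have h3 : HasDerivAt (fun y : ℝ => s ^ (γ - 2) * (y - s) ^ 2 / 2)
            (s ^ (γ - 2) * (2 * (x - s)) / 2) x := by
          have : HasDerivAt (fun y : ℝ => (y - s) ^ 2) (2 * (x - s)) x := by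
            exact (by simpa using (((hasDerivAt_id x).sub_const s).pow 2) :
              HasDerivAt ((fun y : ℝ => y - s) ^ 2) (2 * (x - s)) x)
          simpa using ((this.const_mul (s ^ (γ - 2))).div_const 2)
        exact (h1.sub h2).sub h3
      exact hd.differentiableAt.differentiableWithinAt
    · intro x hx
      rw [interior_Icc] at hx
      have hx0 : 0 < x := lt_trans ht hx.1
      have hd : HasDerivAt g (γ * x ^ (γ - 1) / (γ * (γ - 1)) - s ^ (γ - 1) / (γ - 1)
          - s ^ (γ - 2) * (2 * (x - s)) / 2) x := by
        have h1 : HasDerivAt (fun y : ℝ => (y ^ γ - s ^ γ) / (γ * (γ - 1)))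
            (γ * x ^ (γ - 1) / (γ * (γ - 1))) x :=
          (((Real.hasDerivAt_rpow_const (Or.inl hx0.ne')).sub_const _).div_const _)
        have h2 : HasDerivAt (fun y : ℝ => s ^ (γ - 1) * (y - s) / (γ - 1))
            (s ^ (γ - 1) / (γ - 1)) x := by
          simpa using ((((hasDerivAt_id x).sub_const s).const_mul (s ^ (γ - 1))).div_const (γ - 1))
        have h3 : HasDerivAt (fun y : ℝ => s ^ (γ - 2) * (y - s) ^ 2 / 2)
            (s ^ (γ - 2) * (2 * (x - s)) / 2) x := by
          have : HasDerivAt (fun y : ℝ => (y - s) ^ 2) (2 * (x - s)) x := by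
            exact (by simpa using (((hasDerivAt_id x).sub_const s).pow 2) :
              HasDerivAt ((fun y : ℝ => y - s) ^ 2) (2 * (x - s)) x)
          simpa using ((this.const_mul (s ^ (γ - 2))).div_const 2)
        exact (h1.sub h2).sub h3
      rw [hd.deriv]
      have hux := hu x ⟨hx.1.le, hx.2.le⟩
      have hsimp : γ * x ^ (γ - 1) / (γ * (γ - 1)) = x ^ (γ - 1) / (γ - 1) :=
        mul_div_mul_left _ _ hγ0
      rw [hsimp]
      have key : x ^ (γ - 1) / (γ - 1) - s ^ (γ - 1) / (γ - 1) ≤ s ^ (γ - 2) * (x - s) := by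
        rw [div_sub_div_same, div_le_iff_of_neg hγ1']
        nlinarith [hux]
      nlinarith [key]
  have hgt : 0 ≤ g t := by
    have := hantig (left_mem_Icc.mpr hts) (right_mem_Icc.mpr hts) hts
    rw [hgs] at this; exact this
  -- now conclude
  have hR : s ^ (γ - 2) * (t - s) ^ 2 / 2 ≤
      (t ^ γ - s ^ γ) / (γ * (γ - 1)) - s ^ (γ - 1) * (t - s) / (γ - 1) := by
    rw [hg_def] at hgt; linarith
  have hA : (0 : ℝ) ≤ 2 * s ^ (2 - γ) := by positivity
  have hprod : (s - t) ^ 2 ≤ (2 * s ^ (2 - γ)) *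
      ((t ^ γ - s ^ γ) / (γ * (γ - 1)) - s ^ (γ - 1) * (t - s) / (γ - 1)) := by
    calc (s - t) ^ 2 = (2 * s ^ (2 - γ)) * (s ^ (γ - 2) * (t - s) ^ 2 / 2) := by
          have h1 : s ^ (2 - γ) * s ^ (γ - 2) = 1 := by
            rw [← Real.rpow_add hs]; norm_num
          nlinarith [h1]
      _ ≤ _ := by
          apply mul_le_mul_of_nonneg_left hR hA
  calc s - t = Real.sqrt ((s - t) ^ 2) := by
        rw [Real.sqrt_sq (by linarith)]
    _ ≤ Real.sqrt ((2 * s ^ (2 - γ)) *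
        ((t ^ γ - s ^ γ) / (γ * (γ - 1)) - s ^ (γ - 1) * (t - s) / (γ - 1))) :=
        Real.sqrt_le_sqrt hprod
    _ = _ := Real.sqrt_mul hA _
end
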